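/- arXiv:1808.10573 — 6 statements merged into one kernel-verified Lean document; each statement's English description precedes it below -/
import Mathlib

section
/- Let a : ℕ → ℂ satisfy a(0)=1 and a(m+1) = a(1)·a(m) − q·a(m−1) for m ≥ 1, with q ≠ 0. If a(1) ≠ 0 and a(r) = 0 for some r ≥ 2, then a(1)² / q = (1+ζ)(1+ζ^{-1}) = 2 + ζ + ζ^{-1} for some root of unity ζ ≠ −1. -/
theorem stmt_3 (a : ℕ → ℂ) (q : ℂ) (hq : q ≠ 0)
    (h0 : a 0 = 1)
    (hrec : ∀ m : ℕ, 1 ≤ m → a (m + 1) = a 1 * a m - q * a (m - 1))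
    (h1 : a 1 ≠ 0) (r : ℕ) (hr : 2 ≤ r) (hvan : a r = 0) :
    ∃ ζ : ℂ, (∃ n : ℕ, 0 < n ∧ ζ ^ n = 1) ∧ ζ ≠ -1 ∧
      a 1 ^ 2 / q = 2 + ζ + ζ⁻¹ := by
  obtain ⟨s, hs⟩ : ∃ s : ℂ, s ^ 2 = a 1 ^ 2 - 4 * q := IsAlgClosed.exists_pow_nat_eq _ two_pos
  set α : ℂ := (a 1 + s) / 2 with hα
  set β : ℂ := (a 1 - s) / 2 with hβ
  have hsum : α + β = a 1 := by rw [hα, hβ]; ring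
  have hprod : α * β = q := by
    rw [hα, hβ]
    have : (a 1 + s) / 2 * ((a 1 - s) / 2) = (a 1 ^ 2 - s ^ 2) / 4 := by ring
    rw [this, hs]; ring
  have hα0 : α ≠ 0 := fun h => hq (by rw [← hprod, h, zero_mul])
  have hβ0 : β ≠ 0 := fun h => hq (by rw [← hprod, h, mul_zero])
  -- α ≠ β
  have hne : α ≠ β := by
    intro he
    have key : ∀ m : ℕ, a m = (m + 1) * α ^ m := by
      intro m
      induction m using Nat.strong_induction_on with
      | _ m ih =>
        match m with
        | 0 => simpa using h0
        | 1 => rw [← hsum, ← he]; push_cast; ring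
        | (n + 2) =>
          have h := hrec (n + 1) (by omega)
          simp only [Nat.add_sub_cancel] at h
          rw [h, ih (n + 1) (by omega), ih n (by omega), ← hsum, ← hprod, ← he]
          push_cast; ring
    have := key r
    rw [hvan] at this
    have hr1 : ((r : ℂ) + 1) ≠ 0 := by
      have : ((r : ℂ) + 1) = ((r + 1 : ℕ) : ℂ) := by push_cast; ring
      rw [this]
      exact_mod_cast Nat.succ_ne_zero r
    exact (mul_ne_zero hr1 (pow_ne_zero r hα0)) this.symm
  -- closed form
  have key : ∀ m : ℕ, (α - β) * a m = α ^ (m + 1) - β ^ (m + 1) := by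
    have H : ∀ m : ℕ, (α - β) * a m = α ^ (m + 1) - β ^ (m + 1) ∧
        (α - β) * a (m + 1) = α ^ (m + 2) - β ^ (m + 2) := by
      intro m
      induction m with
      | zero =>
        constructor
        · rw [h0]; ring
        · rw [← hsum]; ring
      | succ n ih =>
        refine ⟨ih.2, ?_⟩
        have h := hrec (n + 1) (by omega)
        simp only [Nat.add_sub_cancel] at h
        rw [h, ← hsum, ← hprod]
        have e1 := ih.1
        have e2 := ih.2
        calc (α - β) * ((α + β) * a (n + 1) - α * β * a n)
            = (α + β) * ((α - β) * a (n + 1)) - α * β * ((α - β) * a n) := by ring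
          _ = (α + β) * (α ^ (n + 2) - β ^ (n + 2)) - α * β * (α ^ (n + 1) - β ^ (n + 1)) := by
              rw [e1, e2]
          _ = α ^ (n + 1 + 2) - β ^ (n + 1 + 2) := by ring
    exact fun m => (H m).1
  have hpow : α ^ (r + 1) = β ^ (r + 1) := by
    have := key r
    rw [hvan, mul_zero] at this
    linear_combination -this
  refine ⟨α / β, ⟨r + 1, by omega, by rw [div_pow, hpow, div_self (pow_ne_zero _ hβ0)]⟩, ?_, ?_⟩
  · intro h
    rw [div_eq_iff hβ0] at h
    exact h1 (by rw [← hsum, h]; ring)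
  · rw [← hsum, ← hprod]
    field_simp
    ring
end

section
/- Let a, b : ℕ → ℂ each satisfy a Hecke-type recurrence a(m+1) = a(1)a(m) − q₁·a(m−1) and b(m+1) = b(1)b(m) − q₂·b(m−1) for m ≥ 1, with a(0) = b(0) = 1 and q₁, q₂ ≠ 0. Assume moreover that for each sequence, either the value at 1 is nonzero and all values are nonzero, or the value at 1 is zero. Then the set A = {m ∈ ℕ : a(m)·b(m) ≠ 0} either equals ℕ (natural density 1) or equals 2ℕ (natural density 1/2). -/
lemma aux_zero (a : ℕ → ℂ) (q : ℂ) (hq : q ≠ 0) (ha0 : a 0 = 1)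
    (hrec : ∀ m : ℕ, 1 ≤ m → a (m + 1) = a 1 * a m - q * a (m - 1))
    (h1 : a 1 = 0) : ∀ k : ℕ, a (2 * k) = (-q) ^ k ∧ a (2 * k + 1) = 0 := by
  have step : ∀ m : ℕ, a (m + 2) = -q * a m := by
    intro m
    have := hrec (m + 1) (by omega)
    simpa [h1] using this
  intro k
  induction k with
  | zero => simp [ha0, h1]
  | succ n ih =>
    have h2 : 2 * (n + 1) = 2 * n + 2 := by ring
    have h3 : 2 * (n + 1) + 1 = (2 * n + 1) + 2 := by ring
    rw [h2, show 2 * n + 2 + 1 = (2 * n + 1) + 2 from rfl, step, step, ih.1, ih.2]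
    exact ⟨by ring, by ring⟩

theorem stmt_5 (a b : ℕ → ℂ) (q₁ q₂ : ℂ) (hq₁ : q₁ ≠ 0) (hq₂ : q₂ ≠ 0)
    (ha0 : a 0 = 1) (hb0 : b 0 = 1)
    (hreca : ∀ m : ℕ, 1 ≤ m → a (m + 1) = a 1 * a m - q₁ * a (m - 1))
    (hrecb : ∀ m : ℕ, 1 ≤ m → b (m + 1) = b 1 * b m - q₂ * b (m - 1))
    (hacase : (a 1 ≠ 0 ∧ ∀ m : ℕ, a m ≠ 0) ∨ a 1 = 0)
    (hbcase : (b 1 ≠ 0 ∧ ∀ m : ℕ, b m ≠ 0) ∨ b 1 = 0) :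
    {m : ℕ | a m * b m ≠ 0} = Set.univ ∨
      {m : ℕ | a m * b m ≠ 0} = {m : ℕ | Even m} := by
  -- key characterizations
  have haeven : ∀ m, Even m → a m ≠ 0 := by
    rcases hacase with ⟨_, h⟩ | h1
    · intro m _; exact h m
    · rintro m ⟨k, rfl⟩
      have := (aux_zero a q₁ hq₁ ha0 hreca h1 k).1
      rw [show k + k = 2 * k by ring, this]
      exact pow_ne_zero _ (by simpa using hq₁)
  have hbeven : ∀ m, Even m → b m ≠ 0 := by
    rcases hbcase with ⟨_, h⟩ | h1
    · intro m _; exact h m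
    · rintro m ⟨k, rfl⟩
      have := (aux_zero b q₂ hq₂ hb0 hrecb h1 k).1
      rw [show k + k = 2 * k by ring, this]
      exact pow_ne_zero _ (by simpa using hq₂)
  rcases hacase with ⟨_, ha⟩ | h1
  · rcases hbcase with ⟨_, hb⟩ | h1'
    · left
      ext m
      simp [ha m, hb m]
    · right
      ext m
      simp only [Set.mem_setOf_eq, mul_ne_zero_iff]
      constructor
      · rintro ⟨-, hbm⟩
        by_contra hodd
        obtain ⟨k, hk⟩ := Nat.not_even_iff_odd.mp hodd
        exact hbm (by rw [hk, show 2 * k + 1 = 2 * k + 1 from rfl,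
          (aux_zero b q₂ hq₂ hb0 hrecb h1' k).2])
      · intro he
        exact ⟨ha m, hbeven m he⟩
  · right
    ext m
    simp only [Set.mem_setOf_eq, mul_ne_zero_iff]
    constructor
    · rintro ⟨ham, -⟩
      by_contra hodd
      obtain ⟨k, hk⟩ := Nat.not_even_iff_odd.mp hodd
      exact ham (by rw [hk, (aux_zero a q₁ hq₁ ha0 hreca h1 k).2])
    · intro he
      exact ⟨haeven m he, hbeven m he⟩
end

section
/- For an even positive integer m, the Sato–Tate measure of the set S = ⋃_{j=0}^{m/2} (2jπ/(m+1), (2j+1)π/(m+1)) equals (m+2)/(2(m+1)) − (1/(2π))·tan(π/(m+1)), where the Sato–Tate measure of a set I ⊆ [0,π] is (2/π)∫_I sin²θ dθ. -/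
open MeasureTheory

private lemma per_trig (x a : ℝ) :
    Real.sin (2*x - a) - Real.sin (2*x + 3*a)
      = 4 * Real.cos a * (Real.sin x * Real.cos x - Real.sin (x + a) * Real.cos (x + a)) := by
  have h1 := Real.sin_sq_add_cos_sq a
  rw [show 2*x - a = x + x + -a by ring, show 2*x + 3*a = (x + x) + (a + (a + a)) by ring]
  simp only [Real.sin_add, Real.cos_add, Real.sin_neg, Real.cos_neg]
  linear_combination (Real.sin a * (Real.cos x ^ 2 - Real.sin x ^ 2)
      - 2 * Real.sin x * Real.cos x * Real.cos a + 4 * Real.sin x * Real.cos x * Real.cos a) * h1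

private lemma aux_main (n : ℕ) (hn : 1 ≤ n) :
    (2 / Real.pi) *
      ∫ θ in ⋃ j ∈ Finset.range (n + 1),
        Set.Ioo ((2 * (j : ℝ) * Real.pi) / ((n : ℝ) + n + 1))
          (((2 * (j : ℝ) + 1) * Real.pi) / ((n : ℝ) + n + 1)),
        Real.sin θ ^ 2 =
    ((n : ℝ) + n + 2) / (2 * ((n : ℝ) + n + 1)) -
      (1 / (2 * Real.pi)) * Real.tan (Real.pi / ((n : ℝ) + n + 1)) := by
  have hpi := Real.pi_pos
  have hM : (0 : ℝ) < (n : ℝ) + n + 1 := by positivity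
  set α : ℝ := Real.pi / ((n : ℝ) + n + 1) with hα
  have hα0 : 0 < α := div_pos hpi hM
  have hn' : (1 : ℝ) ≤ n := by exact_mod_cast hn
  have hαlt : α < Real.pi / 2 := by
    rw [hα, div_lt_div_iff₀ hM (by norm_num)]
    nlinarith
  have hcos : 0 < Real.cos α := Real.cos_pos_of_mem_Ioo ⟨by linarith, hαlt⟩
  set f : ℕ → ℝ := fun j => Real.sin ((4 * (j : ℝ) - 1) * α) with hf
  -- endpoints in terms of α
  have hend : ∀ j : ℕ, (2 * (j : ℝ) * Real.pi) / ((n : ℝ) + n + 1) = 2 * (j : ℝ) * α ∧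
      ((2 * (j : ℝ) + 1) * Real.pi) / ((n : ℝ) + n + 1) = (2 * (j : ℝ) + 1) * α := by
    intro j; constructor <;> (rw [hα]; ring)
  have hle : ∀ j : ℕ, 2 * (j : ℝ) * α ≤ (2 * (j : ℝ) + 1) * α := by
    intro j
    have : (0 : ℝ) ≤ (j : ℝ) := Nat.cast_nonneg j
    nlinarith
  -- each interval's integral
  have hrw : ∀ j ∈ Finset.range (n + 1),
      (∫ θ in Set.Ioo ((2 * (j : ℝ) * Real.pi) / ((n : ℝ) + n + 1))
          (((2 * (j : ℝ) + 1) * Real.pi) / ((n : ℝ) + n + 1)), Real.sin θ ^ 2)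
        = ((f j - f (j + 1)) / (4 * Real.cos α) + α) / 2 := by
    intro j _
    rw [(hend j).1, (hend j).2, ← MeasureTheory.integral_Ioc_eq_integral_Ioo,
      ← intervalIntegral.integral_of_le (hle j), integral_sin_sq]
    have hper := per_trig (2 * (j : ℝ) * α) α
    have e1 : 2 * (2 * (j : ℝ) * α) - α = (4 * (j : ℝ) - 1) * α := by ring
    have e2 : 2 * (2 * (j : ℝ) * α) + 3 * α = (4 * ((j : ℕ) + 1 : ℕ) - 1) * α := by
      push_cast; ring
    have e3 : 2 * (j : ℝ) * α + α = (2 * (j : ℝ) + 1) * α := by ring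
    rw [e1, e2, e3] at hper
    simp only [hf]
    have hT : (Real.sin ((4 * (j : ℝ) - 1) * α) - Real.sin ((4 * ((j + 1 : ℕ) : ℝ) - 1) * α))
          / (4 * Real.cos α)
        = Real.sin (2 * (j : ℝ) * α) * Real.cos (2 * (j : ℝ) * α)
          - Real.sin ((2 * (j : ℝ) + 1) * α) * Real.cos ((2 * (j : ℝ) + 1) * α) := by
      rw [hper]; field_simp
    rw [hT]; ring
  -- disjointness
  have hdisj : Set.Pairwise ↑(Finset.range (n + 1))
      (Function.onFun Disjoint fun j : ℕ => Set.Ioo ((2 * (j : ℝ) * Real.pi) / ((n : ℝ) + n + 1))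
        (((2 * (j : ℝ) + 1) * Real.pi) / ((n : ℝ) + n + 1))) := by
    intro i _ j _ hij
    simp only [Function.onFun, (hend i).1, (hend i).2, (hend j).1, (hend j).2]
    rw [Set.Ioo_disjoint_Ioo]
    rcases lt_or_gt_of_ne hij with h | h
    · have h2 : (2 * (i : ℝ) + 1) ≤ 2 * (j : ℝ) := by
        have : 2 * i + 1 ≤ 2 * j := by omega
        exact_mod_cast this
      calc min ((2 * (i : ℝ) + 1) * α) ((2 * (j : ℝ) + 1) * α)
          ≤ (2 * (i : ℝ) + 1) * α := min_le_left _ _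
        _ ≤ 2 * (j : ℝ) * α := mul_le_mul_of_nonneg_right h2 hα0.le
        _ ≤ max (2 * (i : ℝ) * α) (2 * (j : ℝ) * α) := le_max_right _ _
    · have h2 : (2 * (j : ℝ) + 1) ≤ 2 * (i : ℝ) := by
        have : 2 * j + 1 ≤ 2 * i := by omega
        exact_mod_cast this
      calc min ((2 * (i : ℝ) + 1) * α) ((2 * (j : ℝ) + 1) * α)
          ≤ (2 * (j : ℝ) + 1) * α := min_le_right _ _
        _ ≤ 2 * (i : ℝ) * α := mul_le_mul_of_nonneg_right h2 hα0.le
        _ ≤ max (2 * (i : ℝ) * α) (2 * (j : ℝ) * α) := le_max_left _ _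
  -- integrability
  have hint : ∀ j ∈ Finset.range (n + 1),
      IntegrableOn (fun θ => Real.sin θ ^ 2)
        (Set.Ioo ((2 * (j : ℝ) * Real.pi) / ((n : ℝ) + n + 1))
          (((2 * (j : ℝ) + 1) * Real.pi) / ((n : ℝ) + n + 1))) volume := by
    intro j _
    rw [(hend j).1, (hend j).2]
    exact (intervalIntegrable_iff_integrableOn_Ioo_of_le (hle j)).mp
      ((Real.continuous_sin.pow 2).intervalIntegrable _ _)
  rw [integral_biUnion_finset _ (fun j _ => measurableSet_Ioo) hdisj hint,
    Finset.sum_congr rfl hrw, ← Finset.sum_div, Finset.sum_add_distrib,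
    ← Finset.sum_div, Finset.sum_range_sub' f, Finset.sum_const, Finset.card_range,
    nsmul_eq_mul]
  -- evaluate f 0 and f (n+1)
  have hf0 : f 0 = -Real.sin α := by
    simp only [hf, Nat.cast_zero]
    rw [show (4 * (0 : ℝ) - 1) * α = -α by ring, Real.sin_neg]
  have hfn : f (n + 1) = Real.sin α := by
    simp only [hf]
    rw [show (4 * ((n + 1 : ℕ) : ℝ) - 1) * α = α + 2 * Real.pi by
      push_cast [hα]; field_simp; ring, Real.sin_add_two_pi]
  rw [hf0, hfn, Real.tan_eq_sin_div_cos, hα]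
  field_simp
  push_cast
  ring

theorem stmt_9 (m : ℕ) (hm : 0 < m) (hme : Even m) :
    (2 / Real.pi) *
      ∫ θ in ⋃ j ∈ Finset.range (m / 2 + 1),
        Set.Ioo ((2 * j * Real.pi) / (m + 1)) (((2 * j + 1) * Real.pi) / (m + 1)),
        Real.sin θ ^ 2 =
    (m + 2) / (2 * (m + 1)) - (1 / (2 * Real.pi)) * Real.tan (Real.pi / (m + 1)) := by
  obtain ⟨n, rfl⟩ := hme
  have hn : 1 ≤ n := by omega
  have h2 : (n + n) / 2 + 1 = n + 1 := by omega
  rw [h2]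
  push_cast
  exact aux_main n hn
end

section
/- For an even positive integer m, the Sato–Tate measure (2/π)∫ sin²θ dθ of the set ⋃_{j=1}^{m/2} ((2j−1)π/(m+1), 2jπ/(m+1)) equals m/(2(m+1)) + (1/(2π))·tan(π/(m+1)). -/
open MeasureTheory

lemma trig_sum (θ : ℝ) (n : ℕ) :
    2 * Real.cos (θ / 2) *
      ∑ j ∈ Finset.Icc 1 n, (Real.sin (2 * j * θ) - Real.sin ((2 * j - 1) * θ)) =
    Real.sin ((4 * n + 1) * θ / 2) - Real.sin (θ / 2) := by
  have key : ∀ b : ℝ, 2 * Real.cos (θ / 2) * Real.sin b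
      = Real.sin (b + θ / 2) + Real.sin (b - θ / 2) := by
    intro b; rw [Real.sin_add, Real.sin_sub]; ring
  induction n with
  | zero => simp
  | succ n ih =>
    rw [Finset.sum_Icc_succ_top (by omega : 1 ≤ n + 1), mul_add, ih, mul_sub, key, key]
    push_cast
    have e1 : 2 * ((n : ℝ) + 1) * θ + θ / 2 = (4 * (n + 1) + 1) * θ / 2 := by ring
    have e2 : 2 * ((n : ℝ) + 1) * θ - θ / 2 = (4 * n + 3) * θ / 2 := by ring
    have e3 : (2 * ((n : ℝ) + 1) - 1) * θ + θ / 2 = (4 * n + 3) * θ / 2 := by ring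
    have e4 : (2 * ((n : ℝ) + 1) - 1) * θ - θ / 2 = (4 * n + 1) * θ / 2 := by ring
    rw [e1, e2, e3, e4]
    ring

theorem stmt_10 (m : ℕ) (hm : 0 < m) (hme : Even m) :
    (2 / Real.pi) *
      ∫ θ in ⋃ j ∈ Finset.Icc 1 (m / 2),
        Set.Ioo (((2 * j - 1) * Real.pi) / (m + 1)) ((2 * j * Real.pi) / (m + 1)),
        Real.sin θ ^ 2 =
    m / (2 * (m + 1)) + (1 / (2 * Real.pi)) * Real.tan (Real.pi / (m + 1)) := by
  have hπ := Real.pi_pos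
  set n := m / 2 with hn
  have hm2 : (m : ℝ) = 2 * n := by
    have h := Nat.div_two_mul_two_of_even hme
    have : (n : ℝ) * 2 = m := by exact_mod_cast h
    linarith
  have hN : (0:ℝ) < (m : ℝ) + 1 := by positivity
  -- disjointness
  have hdisj : Set.Pairwise ↑(Finset.Icc 1 n)
      (Function.onFun Disjoint fun j : ℕ => Set.Ioo (((2 * j - 1) * Real.pi) / ((m:ℝ) + 1))
        ((2 * j * Real.pi) / ((m:ℝ) + 1))) := by
    have key : ∀ i j : ℕ, i < j → Disjoint
        (Set.Ioo (((2 * (i:ℝ) - 1) * Real.pi) / ((m:ℝ) + 1)) ((2 * i * Real.pi) / ((m:ℝ) + 1)))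
        (Set.Ioo (((2 * (j:ℝ) - 1) * Real.pi) / ((m:ℝ) + 1)) ((2 * j * Real.pi) / ((m:ℝ) + 1))) := by
      intro i j hij
      rw [Set.disjoint_left]
      rintro x ⟨_, hx2⟩ ⟨hx3, _⟩
      have : 2 * (i:ℝ) ≤ 2 * (j:ℝ) - 1 := by
        have : (i:ℝ) + 1 ≤ j := by exact_mod_cast hij
        linarith
      have : (2 * (i:ℝ) * Real.pi) / ((m:ℝ) + 1) ≤ ((2 * (j:ℝ) - 1) * Real.pi) / ((m:ℝ) + 1) := by
        gcongr
      linarith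
    intro i _ j _ hij
    rcases lt_or_gt_of_ne hij with h | h
    · exact key i j h
    · exact (key j i h).symm
  rw [integral_biUnion_finset (f := fun θ => Real.sin θ ^ 2) _ (fun i _ => measurableSet_Ioo) hdisj
    (fun i _ => (((Real.continuous_sin.pow 2).integrableOn_Icc).mono_set Set.Ioo_subset_Icc_self))]
  -- each integral
  have hstep : ∀ j ∈ Finset.Icc 1 n,
      (∫ θ in Set.Ioo (((2 * (j:ℝ) - 1) * Real.pi) / ((m:ℝ) + 1))
        ((2 * j * Real.pi) / ((m:ℝ) + 1)), Real.sin θ ^ 2) =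
      Real.pi / (2 * ((m:ℝ) + 1)) -
        (Real.sin (2 * j * (2 * Real.pi / ((m:ℝ) + 1)))
          - Real.sin ((2 * j - 1) * (2 * Real.pi / ((m:ℝ) + 1)))) / 4 := by
    intro j hj
    have hab : ((2 * (j:ℝ) - 1) * Real.pi) / ((m:ℝ) + 1) ≤ (2 * j * Real.pi) / ((m:ℝ) + 1) := by
      gcongr; linarith
    rw [← integral_Ioc_eq_integral_Ioo, ← intervalIntegral.integral_of_le hab,
      integral_sin_sq]
    have h1 : Real.sin ((2 * (j:ℝ) - 1) * Real.pi / ((m:ℝ)+1)) *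
        Real.cos ((2 * (j:ℝ) - 1) * Real.pi / ((m:ℝ)+1))
        = Real.sin ((2 * j - 1) * (2 * Real.pi / ((m:ℝ) + 1))) / 2 := by
      rw [show (2 * (j:ℝ) - 1) * (2 * Real.pi / ((m:ℝ) + 1))
          = 2 * ((2 * (j:ℝ) - 1) * Real.pi / ((m:ℝ)+1)) by ring, Real.sin_two_mul]
      ring
    have h2 : Real.sin (2 * (j:ℝ) * Real.pi / ((m:ℝ)+1)) *
        Real.cos (2 * (j:ℝ) * Real.pi / ((m:ℝ)+1))
        = Real.sin (2 * j * (2 * Real.pi / ((m:ℝ) + 1))) / 2 := by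
      rw [show 2 * (j:ℝ) * (2 * Real.pi / ((m:ℝ) + 1))
          = 2 * (2 * (j:ℝ) * Real.pi / ((m:ℝ)+1)) by ring, Real.sin_two_mul]
      ring
    rw [h1, h2]
    field_simp
    ring
  rw [Finset.sum_congr rfl hstep, Finset.sum_sub_distrib, Finset.sum_const,
    Nat.card_Icc]
  -- the trig sum
  have hts := trig_sum (2 * Real.pi / ((m:ℝ) + 1)) n
  have harg : (4 * (n:ℝ) + 1) * (2 * Real.pi / ((m:ℝ) + 1)) / 2
      = 2 * Real.pi - Real.pi / ((m:ℝ) + 1) := by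
    rw [hm2]; field_simp; ring
  have harg2 : (2 * Real.pi / ((m:ℝ) + 1)) / 2 = Real.pi / ((m:ℝ) + 1) := by ring
  rw [harg, harg2] at hts
  have hsin : Real.sin (2 * Real.pi - Real.pi / ((m:ℝ) + 1))
      = - Real.sin (Real.pi / ((m:ℝ) + 1)) := by
    rw [Real.sin_sub]; simp
  rw [hsin] at hts
  have hcos : 0 < Real.cos (Real.pi / ((m:ℝ) + 1)) := by
    apply Real.cos_pos_of_mem_Ioo
    constructor
    · linarith [div_pos hπ hN]
    · have hm3 : (3:ℝ) ≤ (m:ℝ) + 1 := by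
        have : 2 ≤ m := by
          obtain ⟨k, hk⟩ := hme; omega
        have : (2:ℝ) ≤ (m:ℝ) := by exact_mod_cast this
        linarith
      calc Real.pi / ((m:ℝ) + 1) ≤ Real.pi / 3 := by gcongr
        _ < Real.pi / 2 := by linarith
  have hsum : (∑ j ∈ Finset.Icc 1 n,
      (Real.sin (2 * (j:ℝ) * (2 * Real.pi / ((m:ℝ) + 1)))
        - Real.sin ((2 * (j:ℝ) - 1) * (2 * Real.pi / ((m:ℝ) + 1)))))
      = - Real.tan (Real.pi / ((m:ℝ) + 1)) := by
    rw [Real.tan_eq_sin_div_cos, ← neg_div, eq_div_iff hcos.ne']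
    linear_combination hts / 2
  rw [← Finset.sum_div, hsum]
  simp only [Nat.add_sub_cancel, nsmul_eq_mul]
  rw [hm2]
  field_simp
  ring
end

section
/- For an odd positive integer m, the Sato–Tate measure (2/π)∫ sin²θ dθ of the set {θ ∈ (0,π) : sin((m+1)θ) > 0} equals 1/2. -/
open MeasureTheory

theorem stmt_11 (m : ℕ) (hm : 0 < m) (hmo : Odd m) :
    (2 / Real.pi) *
      ∫ θ in {θ : ℝ | θ ∈ Set.Ioo 0 Real.pi ∧ 0 < Real.sin ((m + 1) * θ)},
        Real.sin θ ^ 2 = 1 / 2 := by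
  have hpi := Real.pi_pos
  set f : ℝ → ℝ := fun θ => Real.sin θ ^ 2 with hf
  set S : Set ℝ := {θ : ℝ | θ ∈ Set.Ioo 0 Real.pi ∧ 0 < Real.sin ((m + 1) * θ)} with hS
  set T : Set ℝ := {θ : ℝ | θ ∈ Set.Ioo 0 Real.pi ∧ Real.sin ((m + 1) * θ) < 0} with hT
  -- reflection identity
  have hodd : (-1 : ℝ) ^ (m + 1) = 1 := by
    rcases hmo with ⟨k, hk⟩
    have h2 : m + 1 = 2 * (k + 1) := by omega
    rw [h2, pow_mul]
    norm_num
  have hsin : ∀ x : ℝ, Real.sin ((m + 1) * (Real.pi - x)) = -Real.sin ((m + 1) * x) := by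
    intro x
    have h1 : ((m : ℝ) + 1) * (Real.pi - x) = (m + 1 : ℕ) * Real.pi - ((m + 1) * x) := by
      push_cast; ring
    rw [h1, Real.sin_nat_mul_pi_sub]
    push_cast [hodd]
    ring
  have hmemS : ∀ x : ℝ, (Real.pi - x) ∈ S ↔ x ∈ T := by
    intro x
    simp only [hS, hT, Set.mem_setOf_eq, Set.mem_Ioo, hsin]
    constructor
    · rintro ⟨⟨h1, h2⟩, h3⟩
      exact ⟨⟨by linarith, by linarith⟩, by linarith⟩
    · rintro ⟨⟨h1, h2⟩, h3⟩
      exact ⟨⟨by linarith, by linarith⟩, by linarith⟩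
  -- measurability
  have hmS : MeasurableSet S := by
    apply MeasurableSet.inter
    · exact measurableSet_Ioo
    · exact measurableSet_lt measurable_const
        ((Real.continuous_sin.comp (continuous_const.mul continuous_id)).measurable)
  have hmT : MeasurableSet T := by
    apply MeasurableSet.inter
    · exact measurableSet_Ioo
    · exact measurableSet_lt
        ((Real.continuous_sin.comp (continuous_const.mul continuous_id)).measurable)
        measurable_const
  have hSsub : S ⊆ Set.Ioo 0 Real.pi := fun x hx => hx.1
  have hTsub : T ⊆ Set.Ioo 0 Real.pi := fun x hx => hx.1
  -- integrability
  have hint : IntegrableOn f (Set.Ioo 0 Real.pi) := by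
    exact ((Real.continuous_sin.pow 2).integrableOn_Icc).mono_set Set.Ioo_subset_Icc_self
  have hintS : IntegrableOn f S := hint.mono_set hSsub
  have hintT : IntegrableOn f T := hint.mono_set hTsub
  -- reflection: ∫_S f = ∫_T f
  have hrefl : ∫ θ in S, f θ = ∫ θ in T, f θ := by
    rw [← integral_indicator hmS, ← integral_indicator hmT]
    rw [← integral_sub_left_eq_self (S.indicator f) volume Real.pi]
    congr 1
    funext x
    have hfx : f (Real.pi - x) = f x := by
      simp only [hf, Real.sin_pi_sub]
    by_cases hx : x ∈ T
    · rw [Set.indicator_of_mem hx, Set.indicator_of_mem ((hmemS x).2 hx), hfx]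
    · rw [Set.indicator_of_notMem hx,
        Set.indicator_of_notMem (fun h => hx ((hmemS x).1 h))]
  -- zero set is null
  have hZ : volume {θ : ℝ | θ ∈ Set.Ioo 0 Real.pi ∧ Real.sin ((m + 1) * θ) = 0} = 0 := by
    have hsub : {θ : ℝ | θ ∈ Set.Ioo 0 Real.pi ∧ Real.sin ((m + 1) * θ) = 0} ⊆
        Set.range (fun j : ℤ => (j : ℝ) * Real.pi / ((m : ℝ) + 1)) := by
      rintro θ ⟨_, hθ⟩
      obtain ⟨j, hj⟩ := Real.sin_eq_zero_iff.1 hθ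
      refine ⟨j, ?_⟩
      have hm1 : (m : ℝ) + 1 ≠ 0 := by positivity
      field_simp
      linarith [hj]
    exact measure_mono_null hsub ((Set.countable_range _).measure_zero volume)
  -- S ∪ T =ᵐ Ioo 0 π
  have hae : (S ∪ T : Set ℝ) =ᵐ[volume] Set.Ioo 0 Real.pi := by
    rw [ae_eq_set]
    constructor
    · have he : (S ∪ T) \ Set.Ioo 0 Real.pi = ∅ := by
        ext x
        simp only [Set.mem_diff, Set.mem_empty_iff_false, iff_false, not_and, Set.mem_union]
        rintro (h | h) h2
        exacts [h2 (hSsub h), h2 (hTsub h)]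
      rw [he]
      simp
    · refine measure_mono_null (fun x hx => ?_) hZ
      rcases lt_trichotomy (Real.sin ((m + 1) * x)) 0 with h | h | h
      · exact absurd (Or.inr ⟨hx.1, h⟩) hx.2
      · exact ⟨hx.1, h⟩
      · exact absurd (Or.inl ⟨hx.1, h⟩) hx.2
  have hdisj : Disjoint S T := by
    rw [Set.disjoint_left]
    rintro x ⟨_, h1⟩ ⟨_, h2⟩
    linarith
  -- total integral
  have htotal : ∫ θ in Set.Ioo 0 Real.pi, f θ = Real.pi / 2 := by
    have : ∫ θ in (0:ℝ)..Real.pi, f θ = Real.pi / 2 := by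
      rw [hf]
      rw [integral_sin_sq]
      simp [Real.sin_pi]
    rw [← this, intervalIntegral.integral_of_le hpi.le,
      MeasureTheory.integral_Ioc_eq_integral_Ioo]
  clear_value f S T
  have hsum : (∫ θ in S, f θ) + ∫ θ in T, f θ = Real.pi / 2 := by
    have h1 := setIntegral_union hdisj hmT hintS hintT
    rw [setIntegral_congr_set hae, htotal] at h1
    exact h1.symm
  have hSval : ∫ θ in S, f θ = Real.pi / 4 := by
    rw [hrefl] at hsum
    rw [hrefl]
    linarith
  rw [hSval]
  field_simp
  ring
end

section
/- Let a : ℕ → ℝ satisfy a(0) = 1 and a(m+1) = a(1)·a(m) − q·a(m−1) for m ≥ 1 with q > 0 real. Suppose a(1)² ≤ 4q (Deligne-type bound) and suppose the sequence a(m) is of one sign for all sufficiently large m (eventually nonnegative or eventually nonpositive). Then a(1)² = 4q, i.e. a(1) = ±2√q. -/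
open Real

lemma hit_interval' {θ : ℝ} (h0 : 0 < θ) (hπ : θ < π) (c : ℝ) (hc : 0 ≤ c) :
    ∃ n : ℕ, c < n * θ ∧ n * θ < c + π := by
  refine ⟨⌊c / θ⌋₊ + 1, ?_, ?_⟩
  · have h1 : c / θ < (⌊c / θ⌋₊ : ℝ) + 1 := Nat.lt_floor_add_one _
    have hcθ : (c / θ) * θ = c := by field_simp
    push_cast
    nlinarith
  · have h1 : (⌊c / θ⌋₊ : ℝ) ≤ c / θ := Nat.floor_le (by positivity)
    have hcθ : (c / θ) * θ = c := by field_simp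
    push_cast
    nlinarith

lemma exists_sin_pos' {θ : ℝ} (h0 : 0 < θ) (hπ : θ < π) (B : ℝ) :
    ∃ n : ℕ, B ≤ n * θ ∧ 0 < Real.sin (n * θ) := by
  have hπpos := Real.pi_pos
  obtain ⟨k, hk⟩ := exists_nat_ge (B / (2 * π))
  set c : ℝ := k * (2 * π) with hc
  have hc0 : 0 ≤ c := by positivity
  have hBc : B ≤ c := by
    have := (div_le_iff₀ (by positivity : (0:ℝ) < 2 * π)).mp hk
    linarith
  obtain ⟨n, hn1, hn2⟩ := hit_interval' h0 hπ c hc0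
  refine ⟨n, by linarith, ?_⟩
  have hper : Real.sin ((n * θ - c) + (k : ℤ) * (2 * π)) = Real.sin (n * θ - c) :=
    Real.sin_add_int_mul_two_pi _ _
  have harg : (n * θ - c) + (k : ℤ) * (2 * π) = n * θ := by
    push_cast [hc]; ring
  rw [harg] at hper
  rw [hper]
  exact Real.sin_pos_of_pos_of_lt_pi (by linarith) (by linarith)

lemma exists_sin_neg' {θ : ℝ} (h0 : 0 < θ) (hπ : θ < π) (B : ℝ) :
    ∃ n : ℕ, B ≤ n * θ ∧ Real.sin (n * θ) < 0 := by
  have hπpos := Real.pi_pos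
  obtain ⟨k, hk⟩ := exists_nat_ge (B / (2 * π))
  set c : ℝ := k * (2 * π) + π with hc
  have hc0 : 0 ≤ c := by positivity
  have hBc : B ≤ c := by
    have := (div_le_iff₀ (by positivity : (0:ℝ) < 2 * π)).mp hk
    linarith
  obtain ⟨n, hn1, hn2⟩ := hit_interval' h0 hπ c hc0
  refine ⟨n, by linarith, ?_⟩
  have hper : Real.sin ((n * θ - (k : ℤ) * (2 * π)) + (k : ℤ) * (2 * π))
      = Real.sin (n * θ - (k : ℤ) * (2 * π)) := Real.sin_add_int_mul_two_pi _ _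
  have harg : (n * θ - (k : ℤ) * (2 * π)) + (k : ℤ) * (2 * π) = n * θ := by ring
  rw [harg] at hper
  rw [hper]
  have hpi : Real.sin ((n * θ - (k : ℤ) * (2 * π) - π) + π)
      = -Real.sin (n * θ - (k : ℤ) * (2 * π) - π) := Real.sin_add_pi _
  have harg2 : (n * θ - (k : ℤ) * (2 * π) - π) + π = n * θ - (k : ℤ) * (2 * π) := by ring
  rw [harg2] at hpi
  rw [hpi]
  have hs : 0 < Real.sin (n * θ - (k : ℤ) * (2 * π) - π) := by
    apply Real.sin_pos_of_pos_of_lt_pi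
    · push_cast; simp only [hc] at hn1; linarith
    · push_cast; simp only [hc] at hn2; linarith
  linarith

theorem stmt_19 (a : ℕ → ℝ) (q : ℝ) (hq : 0 < q)
    (h0 : a 0 = 1)
    (hrec : ∀ m : ℕ, 1 ≤ m → a (m + 1) = a 1 * a m - q * a (m - 1))
    (hdeligne : a 1 ^ 2 ≤ 4 * q)
    (hsign : (∃ N : ℕ, ∀ m ≥ N, 0 ≤ a m) ∨ (∃ N : ℕ, ∀ m ≥ N, a m ≤ 0)) :
    a 1 ^ 2 = 4 * q := by
  by_contra hne
  have hlt : a 1 ^ 2 < 4 * q := lt_of_le_of_ne hdeligne hne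
  set s : ℝ := Real.sqrt q with hs
  have hs0 : 0 < s := Real.sqrt_pos.mpr hq
  have hs2 : s ^ 2 = q := Real.sq_sqrt hq.le
  set x : ℝ := a 1 / (2 * s) with hx
  have hx2 : x ^ 2 < 1 := by
    rw [hx, div_pow]
    rw [div_lt_one (by positivity)]
    nlinarith
  have hx1 : x < 1 := by nlinarith
  have hxm1 : -1 < x := by nlinarith
  set θ : ℝ := Real.arccos x with hθ
  have hθ0 : 0 < θ := Real.arccos_pos.mpr hx1
  have hcos : Real.cos θ = x := Real.cos_arccos hxm1.le hx1.le
  have hθπ : θ < π := by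
    refine lt_of_le_of_ne (Real.arccos_le_pi x) fun h => ?_
    rw [h, Real.cos_pi] at hcos
    linarith
  have hsinθ : 0 < Real.sin θ := Real.sin_pos_of_pos_of_lt_pi hθ0 hθπ
  have ha1 : a 1 = 2 * s * Real.cos θ := by
    rw [hcos, hx]; field_simp
  -- closed form
  have key : ∀ m : ℕ, a m * Real.sin θ = s ^ m * Real.sin ((m + 1) * θ)
      ∧ a (m + 1) * Real.sin θ = s ^ (m + 1) * Real.sin ((m + 2) * θ) := by
    intro m
    induction m with
    | zero =>
      constructor
      · simp [h0]
      · have h2 : Real.sin (2 * θ) = 2 * Real.sin θ * Real.cos θ := Real.sin_two_mul θ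
        push_cast
        rw [show ((0:ℝ) + 2) = 2 by ring, ha1, h2]
        ring
    | succ n ih =>
      obtain ⟨ih1, ih2⟩ := ih
      refine ⟨?_, ?_⟩
      · push_cast
        rw [show ((n:ℝ) + 1 + 1) = (n:ℝ) + 2 by ring]
        push_cast at ih2
        linarith
      have hr : a (n + 2) = a 1 * a (n + 1) - q * a n := by
        have := hrec (n + 1) (by omega)
        simpa using this
      have hA : Real.sin (((n:ℝ) + 2) * θ + θ) =
          Real.sin (((n:ℝ) + 2) * θ) * Real.cos θ + Real.cos (((n:ℝ) + 2) * θ) * Real.sin θ :=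
        Real.sin_add _ _
      have hB : Real.sin (((n:ℝ) + 2) * θ - θ) =
          Real.sin (((n:ℝ) + 2) * θ) * Real.cos θ - Real.cos (((n:ℝ) + 2) * θ) * Real.sin θ :=
        Real.sin_sub _ _
      have e1 : ((n:ℝ) + 2) * θ + θ = ((n:ℝ) + 3) * θ := by ring
      have e2 : ((n:ℝ) + 2) * θ - θ = ((n:ℝ) + 1) * θ := by ring
      rw [e1] at hA
      rw [e2] at hB
      -- sin((n+3)θ) = 2 cos θ sin((n+2)θ) - sin((n+1)θ)
      have htrig : Real.sin (((n:ℝ) + 3) * θ)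
          = 2 * Real.cos θ * Real.sin (((n:ℝ) + 2) * θ) - Real.sin (((n:ℝ) + 1) * θ) := by
        linarith
      push_cast at ih1 ih2 ⊢
      have goal1 : ((n:ℝ) + 1 + 1 + 1) = (n:ℝ) + 3 := by ring
      rw [hr, ha1]
      have hq' : q = s ^ 2 := hs2.symm
      calc (2 * s * Real.cos θ * a (n + 1) - q * a n) * Real.sin θ
          = 2 * s * Real.cos θ * (a (n + 1) * Real.sin θ) - q * (a n * Real.sin θ) := by ring
        _ = 2 * s * Real.cos θ * (s ^ (n + 1) * Real.sin (((n:ℝ) + 2) * θ))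
              - s ^ 2 * (s ^ n * Real.sin (((n:ℝ) + 1) * θ)) := by rw [ih2, ih1, ← hq']
        _ = s ^ (n + 2) * (2 * Real.cos θ * Real.sin (((n:ℝ) + 2) * θ)
              - Real.sin (((n:ℝ) + 1) * θ)) := by ring
        _ = s ^ (n + 2) * Real.sin (((n:ℝ) + 3) * θ) := by rw [← htrig]
        _ = s ^ (n + 1 + 1) * Real.sin (((n:ℝ) + 1 + 2) * θ) := by
              rw [show ((n:ℝ) + 1 + 2) = (n:ℝ) + 3 from by ring, show n + 1 + 1 = n + 2 from rfl]
  -- derive contradiction from eventual one-signedness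
  rcases hsign with ⟨N, hN⟩ | ⟨N, hN⟩
  · obtain ⟨n, hn1, hn2⟩ := exists_sin_neg' hθ0 hθπ ((N + 1 : ℕ) * θ)
    have hnN : N + 1 ≤ n := by
      by_contra hcon
      push_neg at hcon
      have : (n : ℝ) * θ < (N + 1 : ℕ) * θ := by
        apply mul_lt_mul_of_pos_right _ hθ0
        exact_mod_cast hcon
      linarith
    have hn1' : 1 ≤ n := by omega
    set m : ℕ := n - 1 with hm
    have hmn : m + 1 = n := by omega
    have hval := (key m).1
    have harg : ((m : ℝ) + 1) * θ = (n : ℝ) * θ := by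
      rw [← hmn]; push_cast; ring
    rw [harg] at hval
    have hpos : 0 ≤ a m := hN m (by omega)
    nlinarith [pow_pos hs0 m]
  · obtain ⟨n, hn1, hn2⟩ := exists_sin_pos' hθ0 hθπ ((N + 1 : ℕ) * θ)
    have hnN : N + 1 ≤ n := by
      by_contra hcon
      push_neg at hcon
      have : (n : ℝ) * θ < (N + 1 : ℕ) * θ := by
        apply mul_lt_mul_of_pos_right _ hθ0
        exact_mod_cast hcon
      linarith
    set m : ℕ := n - 1 with hm
    have hmn : m + 1 = n := by omega
    have hval := (key m).1
    have harg : ((m : ℝ) + 1) * θ = (n : ℝ) * θ := by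
      rw [← hmn]; push_cast; ring
    rw [harg] at hval
    have hneg : a m ≤ 0 := hN m (by omega)
    nlinarith [pow_pos hs0 m]
end
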